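/- (Flattening Lemma.) Let Π be any shortsighted algorithm on insertion-only graph streams of length T, i.e., a deterministic map such that Π adds every input node to the output stream at the time the node first arrives, and at each time step adds to the output some subset of the edges arriving at that time step (and no other edges). Then for every pair of edge-neighboring or node-neighboring graph streams S and S' of length T and every t ∈ [T]: d_edge(Π(S)_[t], Π(S')_[t]) = d_edge(flat(Π(S)_[t]), flat(Π(S')_[t])) and d_node(Π(S)_[t], Π(S')_[t]) = d_node(flat(Π(S)_[t]), flat(Π(S')_[t])). -/

import Mathlib

open Finset

/-- A finite graph: a finite vertex set together with a finite set of undirected edges. -/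
structure FinGraph where
  verts : Finset ℕ
  edges : Finset (Sym2 ℕ)

namespace FinGraph

/-- A finite graph is valid if every edge is a non-loop both of whose endpoints are vertices. -/
def Valid (G : FinGraph) : Prop :=
  ∀ e ∈ G.edges, ¬ e.IsDiag ∧ ∀ v ∈ e, v ∈ G.verts

/-- The degree of a vertex: the number of edges containing it. -/
def degree (G : FinGraph) (v : ℕ) : ℕ :=
  (G.edges.filter (fun e => v ∈ e)).card

/-- Remove a node and all of its adjacent edges. -/
def removeNode (G : FinGraph) (v : ℕ) : FinGraph :=
  ⟨G.verts.erase v, G.edges.filter (fun e => v ∉ e)⟩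

/-- Remove a single edge. -/
def removeEdge (G : FinGraph) (e : Sym2 ℕ) : FinGraph :=
  ⟨G.verts, G.edges.erase e⟩

/-- `G` is `(D, ℓ)`-bounded: it has at most `ℓ` nodes of degree greater than `D`. -/
def DLBounded (G : FinGraph) (D ℓ : ℕ) : Prop :=
  (G.verts.filter (fun v => D < G.degree v)).card ≤ ℓ

end FinGraph

/-- One graph is obtained from the other by removing one node and all of its adjacent edges. -/
def nodeNeighborGraph (G G' : FinGraph) : Prop :=
  (∃ v ∈ G.verts, G' = G.removeNode v) ∨ (∃ v ∈ G'.verts, G = G'.removeNode v)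

/-- `G'` is obtained from `G` by removing a single edge, an isolated node,
or a degree-one node together with its adjacent edge. -/
def edgeRemovalGraph (G G' : FinGraph) : Prop :=
  (∃ e ∈ G.edges, G' = G.removeEdge e) ∨
  (∃ v ∈ G.verts, G.degree v = 0 ∧ G' = FinGraph.mk (G.verts.erase v) G.edges) ∨
  (∃ v ∈ G.verts, G.degree v = 1 ∧ G' = G.removeNode v)

/-- Edge-neighboring graphs. -/
def edgeNeighborGraph (G G' : FinGraph) : Prop :=
  edgeRemovalGraph G G' ∨ edgeRemovalGraph G' G

/-- The length of a shortest chain of valid graphs from `A` to `B` in which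
consecutive graphs are related by `R`. -/
noncomputable def graphChainDist (R : FinGraph → FinGraph → Prop) (A B : FinGraph) : ℕ :=
  sInf {n | ∃ f : ℕ → FinGraph, f 0 = A ∧ f n = B ∧ (∀ i ≤ n, (f i).Valid) ∧
    ∀ i < n, R (f i) (f (i + 1))}

/-- Node distance between finite graphs. -/
noncomputable def graphNodeDist : FinGraph → FinGraph → ℕ := graphChainDist nodeNeighborGraph

/-- Edge distance between finite graphs. -/
noncomputable def graphEdgeDist : FinGraph → FinGraph → ℕ := graphChainDist edgeNeighborGraph

/-- An insertion-only graph stream: the nodes and edges arriving at each time step. -/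
structure GraphStream where
  nodes : ℕ → Finset ℕ
  edges : ℕ → Finset (Sym2 ℕ)

namespace GraphStream

/-- Validity of a graph stream of length `T`: arrivals happen only at times `1, …, T`,
no node or edge arrives twice, and every edge is a non-loop whose endpoints
arrive at or before the edge does. -/
def Valid (T : ℕ) (S : GraphStream) : Prop :=
  (∀ t, ((S.nodes t).Nonempty ∨ (S.edges t).Nonempty) → 1 ≤ t ∧ t ≤ T) ∧
  (∀ s t, s ≠ t → Disjoint (S.nodes s) (S.nodes t)) ∧
  (∀ s t, s ≠ t → Disjoint (S.edges s) (S.edges t)) ∧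
  (∀ t, ∀ e ∈ S.edges t, ¬ e.IsDiag ∧ ∀ v ∈ e, ∃ s ≤ t, v ∈ S.nodes s)

/-- The flattened graph of the stream through time `t`. -/
def flat (S : GraphStream) (t : ℕ) : FinGraph :=
  ⟨(Finset.range (t + 1)).biUnion S.nodes, (Finset.range (t + 1)).biUnion S.edges⟩

/-- Remove a node and all of its adjacent edges from a stream. -/
def removeNode (S : GraphStream) (v : ℕ) : GraphStream :=
  ⟨fun t => (S.nodes t).erase v, fun t => (S.edges t).filter (fun e => v ∉ e)⟩

/-- Remove a single edge from a stream. -/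
def removeEdge (S : GraphStream) (e : Sym2 ℕ) : GraphStream :=
  ⟨S.nodes, fun t => (S.edges t).erase e⟩

/-- Truncation of a stream: keep only arrivals at times `≤ t`. -/
def trunc (S : GraphStream) (t : ℕ) : GraphStream :=
  ⟨fun s => if s ≤ t then S.nodes s else ∅, fun s => if s ≤ t then S.edges s else ∅⟩

/-- `v` arrives at some point in the stream. -/
def hasNode (S : GraphStream) (v : ℕ) : Prop :=
  ∃ t, v ∈ S.nodes t

/-- The stream is `(D, ℓ)`-bounded through time `t`. -/
def DLBoundedThrough (S : GraphStream) (D ℓ t : ℕ) : Prop :=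
  (S.flat t).DLBounded D ℓ

end GraphStream

/-- `S'` is obtained from `S` by removing one node and all of its adjacent edges
(which may arrive at many time steps). -/
def nodeRemovalStream (S S' : GraphStream) : Prop :=
  ∃ v, S.hasNode v ∧ S' = S.removeNode v

/-- Node-neighboring streams. -/
def nodeNeighborStream (S S' : GraphStream) : Prop :=
  nodeRemovalStream S S' ∨ nodeRemovalStream S' S

/-- `S'` is obtained from the length-`T` stream `S` by removing a single edge,
an isolated node, or a degree-one node together with its adjacent edge. -/
def edgeRemovalStream (T : ℕ) (S S' : GraphStream) : Prop :=
  (∃ t, ∃ e ∈ S.edges t, S' = S.removeEdge e) ∨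
  (∃ v, S.hasNode v ∧ (S.flat T).degree v ≤ 1 ∧ S' = S.removeNode v)

/-- Edge-neighboring streams (of length `T`). -/
def edgeNeighborStream (T : ℕ) (S S' : GraphStream) : Prop :=
  edgeRemovalStream T S S' ∨ edgeRemovalStream T S' S

/-- Length of a shortest chain of valid streams of length `T` in which consecutive
streams are related by `R`. -/
noncomputable def streamChainDist (T : ℕ) (R : GraphStream → GraphStream → Prop)
    (A B : GraphStream) : ℕ :=
  sInf {n | ∃ f : ℕ → GraphStream, f 0 = A ∧ f n = B ∧ (∀ i ≤ n, (f i).Valid T) ∧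
    ∀ i < n, R (f i) (f (i + 1))}

/-- Node distance between streams of length `T`. -/
noncomputable def streamNodeDist (T : ℕ) : GraphStream → GraphStream → ℕ :=
  streamChainDist T nodeNeighborStream

/-- Edge distance between streams of length `T`. -/
noncomputable def streamEdgeDist (T : ℕ) : GraphStream → GraphStream → ℕ :=
  streamChainDist T (edgeNeighborStream T)

/-- A fixed injective key on undirected edges, providing the consistent total order in
which edges arriving at the same time step are processed. -/
def edgeKey : Sym2 ℕ → ℕ :=
  Sym2.lift ⟨fun a b => Nat.pair (min a b) (max a b), fun a b => by
    dsimp only; rw [inf_comm, sup_comm]⟩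

/-- The two endpoints of an edge, as an ordered pair. -/
def endpointsOf (e : Sym2 ℕ) : ℕ × ℕ := (edgeKey e).unpair

/-- The edges of a finite edge set, listed in increasing `edgeKey` order. -/
def sortEdges (E : Finset (Sym2 ℕ)) : List (Sym2 ℕ) :=
  ((E.image edgeKey).sort (· ≤ ·)).map fun k => s(k.unpair.1, k.unpair.2)

/-- All edges of a stream of length `T`, tagged with their arrival times, in processing
order: lexicographically by (arrival time, consistent edge order). -/
def GraphStream.procList (S : GraphStream) (T : ℕ) : List (ℕ × Sym2 ℕ) :=
  (List.range (T + 1)).flatMap fun t => (sortEdges (S.edges t)).map fun e => (t, e)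

/-- One step of the greedy projection with degree bound `D`.  The state consists of the
degree counters together with the edges kept so far (indexed by arrival time).
If `bbds = true` the counters of the endpoints are incremented for every processed edge
(the BBDS rule); if `bbds = false` they are incremented only when the edge is kept
(the DLL rule). -/
def projStep (D : ℕ) (bbds : Bool) (st : (ℕ → ℕ) × (ℕ → Finset (Sym2 ℕ)))
    (p : ℕ × Sym2 ℕ) : (ℕ → ℕ) × (ℕ → Finset (Sym2 ℕ)) :=
  let d := st.1
  let u := (endpointsOf p.2).1
  let v := (endpointsOf p.2).2
  let keep : Bool := decide (d u < D ∧ d v < D)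
  ((if bbds || keep then fun w => if w = u ∨ w = v then d w + 1 else d w else d),
   (if keep then fun s => if s = p.1 then insert p.2 (st.2 s) else st.2 s else st.2))

/-- The time-aware projection with degree bound `D` on streams of length `T`:
the BBDS projection if `bbds = true` and the DLL projection if `bbds = false`.
All arriving nodes are kept; an arriving edge is kept (at its arrival time) iff both of
its endpoints have counter value `< D` when the edge is processed. -/
def project (bbds : Bool) (D T : ℕ) (S : GraphStream) : GraphStream :=
  ⟨S.nodes,
   ((S.procList T).foldl (projStep D bbds)
      ((fun _ => 0 : ℕ → ℕ), (fun _ => ∅ : ℕ → Finset (Sym2 ℕ)))).2⟩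

/-- The BBDS projection `Π^BBDS_D` on streams of length `T`. -/
def projBBDS (D T : ℕ) : GraphStream → GraphStream := project true D T

/-- The DLL projection `Π^DLL_D` on streams of length `T`. -/
def projDLL (D T : ℕ) : GraphStream → GraphStream := project false D T

/-- A shortsighted algorithm on streams: it keeps every arriving node at its arrival time,
and at each time step it keeps some subset of the edges arriving at that time step
(and adds no other edges). -/
def Shortsighted (Pi : GraphStream → GraphStream) : Prop :=
  ∀ S : GraphStream, (Pi S).nodes = S.nodes ∧ ∀ t, (Pi S).edges t ⊆ S.edges t

/-!
Both output streams are substreams of the truncation to time `t` of the larger of the two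
input streams, so every node and every edge occurring in either of them has one well-defined
arrival time. Flattening turns a chain of streams into a chain of graphs. Conversely, a chain
of graphs lifts to a chain of streams by letting each node and edge arrive at that common
time (and at time `t` if it never arrives); the lift of a flattened output stream is the
stream itself. So both distances are infima of the same set of chain lengths.
-/

attribute [ext] FinGraph GraphStream

namespace GraphStream

@[simp]
lemma mem_flat_verts {S : GraphStream} {t v : ℕ} :
    v ∈ (S.flat t).verts ↔ ∃ s ≤ t, v ∈ S.nodes s := by
  simp [flat]

@[simp]
lemma mem_flat_edges {S : GraphStream} {t : ℕ} {e : Sym2 ℕ} :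
    e ∈ (S.flat t).edges ↔ ∃ s ≤ t, e ∈ S.edges s := by
  simp [flat]

lemma mem_trunc_nodes {S : GraphStream} {t s v : ℕ} :
    v ∈ (S.trunc t).nodes s ↔ s ≤ t ∧ v ∈ S.nodes s := by
  by_cases h : s ≤ t <;> simp [trunc, h]

lemma mem_trunc_edges {S : GraphStream} {t s : ℕ} {e : Sym2 ℕ} :
    e ∈ (S.trunc t).edges s ↔ s ≤ t ∧ e ∈ S.edges s := by
  by_cases h : s ≤ t <;> simp [trunc, h]

lemma flat_trunc (S : GraphStream) (t : ℕ) : (S.trunc t).flat t = S.flat t := by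
  ext x
  · simp only [mem_flat_verts, mem_trunc_nodes]
    grind
  · simp only [mem_flat_edges, mem_trunc_edges]
    grind

lemma flat_removeNode (S : GraphStream) (v t : ℕ) :
    (S.removeNode v).flat t = (S.flat t).removeNode v := by
  ext x
  · simp [removeNode, FinGraph.removeNode]
    grind
  · simp [removeNode, FinGraph.removeNode]
    grind

lemma flat_removeEdge (S : GraphStream) (e : Sym2 ℕ) (t : ℕ) :
    (S.removeEdge e).flat t = (S.flat t).removeEdge e := by
  ext x
  · simp [removeEdge, FinGraph.removeEdge]
  · simp [removeEdge, FinGraph.removeEdge]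
    grind

lemma Valid.bounds_of_mem_nodes {S : GraphStream} {T s v : ℕ} (h : S.Valid T)
    (hv : v ∈ S.nodes s) : 1 ≤ s ∧ s ≤ T :=
  h.1 s (Or.inl ⟨v, hv⟩)

lemma Valid.bounds_of_mem_edges {S : GraphStream} {T s : ℕ} {e : Sym2 ℕ} (h : S.Valid T)
    (he : e ∈ S.edges s) : 1 ≤ s ∧ s ≤ T :=
  h.1 s (Or.inr ⟨e, he⟩)

lemma Valid.mem_flat_verts_of_hasNode {S : GraphStream} {T v : ℕ} (h : S.Valid T) (hv : S.hasNode v) :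
    v ∈ (S.flat T).verts := by
  obtain ⟨s, hs⟩ := hv
  exact mem_flat_verts.2 ⟨s, (h.bounds_of_mem_nodes hs).2, hs⟩

lemma Valid.flat {S : GraphStream} {t : ℕ} (h : S.Valid t) : (S.flat t).Valid := by
  intro e he
  obtain ⟨s, hst, he⟩ := mem_flat_edges.1 he
  obtain ⟨hdiag, hends⟩ := h.2.2.2 s e he
  refine ⟨hdiag, fun v hv => ?_⟩
  obtain ⟨s', hs', hv⟩ := hends v hv
  exact mem_flat_verts.2 ⟨s', hs'.trans hst, hv⟩

lemma Valid.trunc {S : GraphStream} {T : ℕ} (h : S.Valid T) (t : ℕ) : (S.trunc t).Valid t := by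
  refine ⟨fun s hs => ?_, fun s s' hss => ?_, fun s s' hss => ?_, fun s e he => ?_⟩
  · by_cases hst : s ≤ t
    · exact ⟨(h.1 s (by simpa [GraphStream.trunc, hst] using hs)).1, hst⟩
    · simp [GraphStream.trunc, hst] at hs
  · simp only [GraphStream.trunc]
    split_ifs <;> simp [h.2.1 s s' hss]
  · simp only [GraphStream.trunc]
    split_ifs <;> simp [h.2.2.1 s s' hss]
  · obtain ⟨hst, he⟩ := mem_trunc_edges.1 he
    obtain ⟨hdiag, hends⟩ := h.2.2.2 s e he
    refine ⟨hdiag, fun v hv => ?_⟩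
    obtain ⟨s', hs', hv⟩ := hends v hv
    exact ⟨s', hs', mem_trunc_nodes.2 ⟨hs'.trans hst, hv⟩⟩

def IsSubstream (P S : GraphStream) : Prop :=
  ∀ s, P.nodes s ⊆ S.nodes s ∧ P.edges s ⊆ S.edges s

lemma IsSubstream.trans {P Q S : GraphStream} (hPQ : P.IsSubstream Q) (hQS : Q.IsSubstream S) :
    P.IsSubstream S :=
  fun s => ⟨(hPQ s).1.trans (hQS s).1, (hPQ s).2.trans (hQS s).2⟩

lemma IsSubstream.trunc {P S : GraphStream} (h : P.IsSubstream S) (t : ℕ) :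
    (P.trunc t).IsSubstream (S.trunc t) := by
  intro s
  by_cases hst : s ≤ t <;> simp [GraphStream.trunc, hst, h s]

lemma removeNode_isSubstream (S : GraphStream) (v : ℕ) : (S.removeNode v).IsSubstream S :=
  fun _ => ⟨Finset.erase_subset _ _, Finset.filter_subset _ _⟩

lemma removeEdge_isSubstream (S : GraphStream) (e : Sym2 ℕ) : (S.removeEdge e).IsSubstream S :=
  fun _ => ⟨subset_rfl, Finset.erase_subset _ _⟩

end GraphStream

open GraphStream

lemma Shortsighted.isSubstream {Pi : GraphStream → GraphStream} (hPi : Shortsighted Pi)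
    (S : GraphStream) : (Pi S).IsSubstream S :=
  fun s => ⟨(hPi S).1 ▸ subset_rfl, (hPi S).2 s⟩

lemma isSubstream_of_edgeRemovalStream {T : ℕ} {S S' : GraphStream}
    (h : edgeRemovalStream T S S') : S'.IsSubstream S := by
  rcases h with ⟨-, e, -, rfl⟩ | ⟨v, -, -, rfl⟩
  exacts [S.removeEdge_isSubstream e, S.removeNode_isSubstream v]

lemma isSubstream_of_nodeRemovalStream {S S' : GraphStream}
    (h : nodeRemovalStream S S') : S'.IsSubstream S := by
  obtain ⟨v, -, rfl⟩ := h
  exact S.removeNode_isSubstream v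

lemma FinGraph.removeNode_eq_of_degree_eq_zero {G : FinGraph} {v : ℕ} (h : G.degree v = 0) :
    G.removeNode v = ⟨G.verts.erase v, G.edges⟩ := by
  rw [FinGraph.degree, Finset.card_eq_zero, Finset.filter_eq_empty_iff] at h
  simp [FinGraph.removeNode, Finset.filter_true_of_mem h]

lemma edgeRemovalGraph_flat {t : ℕ} {P Q : GraphStream} (hP : P.Valid t)
    (h : edgeRemovalStream t P Q) : edgeRemovalGraph (P.flat t) (Q.flat t) := by
  rcases h with ⟨s, e, he, rfl⟩ | ⟨v, hv, hdeg, rfl⟩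
  · exact Or.inl ⟨e, mem_flat_edges.2 ⟨s, (hP.bounds_of_mem_edges he).2, he⟩,
      flat_removeEdge P e t⟩
  · rw [flat_removeNode]
    rcases Nat.le_one_iff_eq_zero_or_eq_one.1 hdeg with h0 | h1
    · exact Or.inr <| Or.inl ⟨v, hP.mem_flat_verts_of_hasNode hv, h0,
        FinGraph.removeNode_eq_of_degree_eq_zero h0⟩
    · exact Or.inr <| Or.inr ⟨v, hP.mem_flat_verts_of_hasNode hv, h1, rfl⟩

lemma edgeNeighborGraph_flat {t : ℕ} {P Q : GraphStream} (hP : P.Valid t) (hQ : Q.Valid t)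
    (h : edgeNeighborStream t P Q) : edgeNeighborGraph (P.flat t) (Q.flat t) :=
  h.imp (edgeRemovalGraph_flat hP) (edgeRemovalGraph_flat hQ)

lemma nodeNeighborGraph_flat {t : ℕ} {P Q : GraphStream} (hP : P.Valid t) (hQ : Q.Valid t)
    (h : nodeNeighborStream P Q) : nodeNeighborGraph (P.flat t) (Q.flat t) := by
  rcases h with ⟨v, hv, rfl⟩ | ⟨v, hv, rfl⟩
  · exact Or.inl ⟨v, hP.mem_flat_verts_of_hasNode hv, flat_removeNode P v t⟩
  · exact Or.inr ⟨v, hQ.mem_flat_verts_of_hasNode hv, flat_removeNode Q v t⟩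

structure StreamTiming (t : ℕ) where
  node : ℕ → ℕ
  edge : Sym2 ℕ → ℕ
  one_le_node : ∀ v, 1 ≤ node v
  node_le : ∀ v, node v ≤ t
  edge_le : ∀ e, edge e ≤ t
  node_le_edge : ∀ ⦃v e⦄, v ∈ e → node v ≤ edge e

def FinGraph.toStream {t : ℕ} (G : FinGraph) (τ : StreamTiming t) : GraphStream :=
  ⟨fun s => G.verts.filter (τ.node · = s), fun s => G.edges.filter (τ.edge · = s)⟩

def GraphStream.IsTimedBy {t : ℕ} (P : GraphStream) (τ : StreamTiming t) : Prop :=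
  (∀ s v, v ∈ P.nodes s → τ.node v = s) ∧ ∀ s e, e ∈ P.edges s → τ.edge e = s

namespace FinGraph

variable {t : ℕ} (τ : StreamTiming t)

lemma flat_toStream (G : FinGraph) : (G.toStream τ).flat t = G := by
  ext x
  · simpa [toStream] using fun _ => τ.node_le x
  · simpa [toStream] using fun _ => τ.edge_le x

lemma toStream_valid {G : FinGraph} (hG : G.Valid) : (G.toStream τ).Valid t := by
  refine ⟨fun s hs => ?_, fun s s' hss => ?_, fun s s' hss => ?_, fun s e he => ?_⟩
  · rcases hs with ⟨v, hv⟩ | ⟨e, he⟩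
    · obtain ⟨-, rfl⟩ := Finset.mem_filter.1 hv
      exact ⟨τ.one_le_node v, τ.node_le v⟩
    · obtain ⟨heG, rfl⟩ := Finset.mem_filter.1 he
      obtain ⟨v, hv⟩ : ∃ v, v ∈ e := ⟨e.out.1, Sym2.out_fst_mem e⟩
      exact ⟨(τ.one_le_node v).trans (τ.node_le_edge hv), τ.edge_le e⟩
  · exact Finset.disjoint_filter.2 fun _ _ h h' => hss (h.symm.trans h')
  · exact Finset.disjoint_filter.2 fun _ _ h h' => hss (h.symm.trans h')
  · obtain ⟨heG, rfl⟩ := Finset.mem_filter.1 he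
    obtain ⟨hdiag, hends⟩ := hG e heG
    exact ⟨hdiag, fun v hv =>
      ⟨τ.node v, τ.node_le_edge hv, Finset.mem_filter.2 ⟨hends v hv, rfl⟩⟩⟩

lemma toStream_hasNode {G : FinGraph} {v : ℕ} (hv : v ∈ G.verts) : (G.toStream τ).hasNode v :=
  ⟨τ.node v, Finset.mem_filter.2 ⟨hv, rfl⟩⟩

lemma toStream_removeNode (G : FinGraph) (v : ℕ) :
    (G.removeNode v).toStream τ = (G.toStream τ).removeNode v := by
  ext s x
  · simp only [toStream, removeNode, GraphStream.removeNode, Finset.mem_filter,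
      Finset.mem_erase]
    tauto
  · simp only [toStream, removeNode, GraphStream.removeNode, Finset.mem_filter]
    tauto

lemma toStream_removeEdge (G : FinGraph) (e : Sym2 ℕ) :
    (G.removeEdge e).toStream τ = (G.toStream τ).removeEdge e := by
  ext s x
  · rfl
  · simp only [toStream, removeEdge, GraphStream.removeEdge, Finset.mem_filter,
      Finset.mem_erase]
    tauto

lemma edgeRemovalStream_toStream {G G' : FinGraph} (h : edgeRemovalGraph G G') :
    edgeRemovalStream t (G.toStream τ) (G'.toStream τ) := by
  rcases h with ⟨e, he, rfl⟩ | ⟨v, hv, hdeg, rfl⟩ | ⟨v, hv, hdeg, rfl⟩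
  · exact Or.inl ⟨τ.edge e, e, Finset.mem_filter.2 ⟨he, rfl⟩, toStream_removeEdge τ G e⟩
  · rw [← removeNode_eq_of_degree_eq_zero hdeg]
    exact Or.inr ⟨v, toStream_hasNode τ hv, by rw [flat_toStream, hdeg]; omega,
      toStream_removeNode τ G v⟩
  · exact Or.inr ⟨v, toStream_hasNode τ hv, by rw [flat_toStream, hdeg],
      toStream_removeNode τ G v⟩

lemma edgeNeighborStream_toStream {G G' : FinGraph} (h : edgeNeighborGraph G G') :
    edgeNeighborStream t (G.toStream τ) (G'.toStream τ) :=
  h.imp (edgeRemovalStream_toStream τ) (edgeRemovalStream_toStream τ)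

lemma nodeNeighborStream_toStream {G G' : FinGraph} (h : nodeNeighborGraph G G') :
    nodeNeighborStream (G.toStream τ) (G'.toStream τ) := by
  rcases h with ⟨v, hv, rfl⟩ | ⟨v, hv, rfl⟩
  · exact Or.inl ⟨v, toStream_hasNode τ hv, toStream_removeNode τ G v⟩
  · exact Or.inr ⟨v, toStream_hasNode τ hv, toStream_removeNode τ G' v⟩

end FinGraph

lemma GraphStream.IsTimedBy.toStream_flat {t : ℕ} {τ : StreamTiming t} {P : GraphStream}
    (h : P.IsTimedBy τ) : (P.flat t).toStream τ = P := by
  ext s x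
  · simp only [FinGraph.toStream, Finset.mem_filter, mem_flat_verts]
    constructor
    · rintro ⟨⟨s', -, hx⟩, rfl⟩
      rwa [h.1 s' x hx]
    · intro hx
      exact ⟨⟨s, h.1 s x hx ▸ τ.node_le x, hx⟩, h.1 s x hx⟩
  · simp only [FinGraph.toStream, Finset.mem_filter, mem_flat_edges]
    constructor
    · rintro ⟨⟨s', -, hx⟩, rfl⟩
      rwa [h.2 s' x hx]
    · intro hx
      exact ⟨⟨s, h.2 s x hx ▸ τ.edge_le x, hx⟩, h.2 s x hx⟩

section ArrivalTime

variable {α : Type*} {f : ℕ → Finset α} {d : ℕ}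

variable (f d) in
open Classical in
noncomputable def arrivalTime (x : α) : ℕ :=
  if h : ∃ s, x ∈ f s then Nat.find h else d

lemma arrivalTime_eq_of_mem (hf : ∀ s s', s ≠ s' → Disjoint (f s) (f s')) {x : α} {s : ℕ}
    (hx : x ∈ f s) : arrivalTime f d x = s := by
  classical
  have h : ∃ s, x ∈ f s := ⟨s, hx⟩
  rw [arrivalTime, dif_pos h]
  by_contra hne
  exact Finset.disjoint_left.1 (hf _ _ hne) (Nat.find_spec h) hx

lemma arrivalTime_of_forall_notMem {x : α} (hx : ∀ s, x ∉ f s) : arrivalTime f d x = d := by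
  rw [arrivalTime, dif_neg (not_exists.2 hx)]

lemma arrivalTime_mem {I : Set ℕ} (hf : ∀ s x, x ∈ f s → s ∈ I) (hd : d ∈ I) (x : α) :
    arrivalTime f d x ∈ I := by
  classical
  rw [arrivalTime]
  split_ifs with h
  exacts [hf _ x (Nat.find_spec h), hd]

end ArrivalTime

namespace GraphStream.Valid

variable {C : GraphStream} {t : ℕ}

lemma arrivalTime_nodes_mem_Icc (hC : C.Valid t) (ht : 1 ≤ t) (v : ℕ) :
    arrivalTime C.nodes t v ∈ Set.Icc 1 t :=
  arrivalTime_mem (f := C.nodes) (fun _ _ hv => hC.bounds_of_mem_nodes hv) ⟨ht, le_rfl⟩ v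

lemma arrivalTime_edges_le (hC : C.Valid t) (e : Sym2 ℕ) : arrivalTime C.edges t e ≤ t :=
  arrivalTime_mem (f := C.edges) (I := Set.Iic t) (fun _ _ he => (hC.bounds_of_mem_edges he).2)
    (Set.mem_Iic.2 le_rfl) e

lemma arrivalTime_nodes_le_edges (hC : C.Valid t) (ht : 1 ≤ t) {v : ℕ} {e : Sym2 ℕ}
    (hv : v ∈ e) : arrivalTime C.nodes t v ≤ arrivalTime C.edges t e := by
  by_cases he : ∃ s, e ∈ C.edges s
  · obtain ⟨s, hs⟩ := he
    obtain ⟨s', hs', hvs'⟩ := (hC.2.2.2 s e hs).2 v hv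
    rwa [arrivalTime_eq_of_mem hC.2.2.1 hs, arrivalTime_eq_of_mem hC.2.1 hvs']
  · rw [arrivalTime_of_forall_notMem (not_exists.1 he)]
    exact (hC.arrivalTime_nodes_mem_Icc ht v).2

noncomputable def timing (hC : C.Valid t) (ht : 1 ≤ t) : StreamTiming t where
  node := arrivalTime C.nodes t
  edge := arrivalTime C.edges t
  one_le_node v := (hC.arrivalTime_nodes_mem_Icc ht v).1
  node_le v := (hC.arrivalTime_nodes_mem_Icc ht v).2
  edge_le := hC.arrivalTime_edges_le
  node_le_edge _ _ := hC.arrivalTime_nodes_le_edges ht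

lemma isTimedBy_timing (hC : C.Valid t) (ht : 1 ≤ t) {P : GraphStream}
    (hP : P.IsSubstream C) : P.IsTimedBy (hC.timing ht) :=
  ⟨fun s _ hv => arrivalTime_eq_of_mem hC.2.1 ((hP s).1 hv),
    fun s _ he => arrivalTime_eq_of_mem hC.2.2.1 ((hP s).2 he)⟩

end GraphStream.Valid

lemma streamChainDist_eq_graphChainDist {t : ℕ} {Rs : GraphStream → GraphStream → Prop}
    {Rg : FinGraph → FinGraph → Prop} (τ : StreamTiming t)
    (hflat : ∀ P Q, P.Valid t → Q.Valid t → Rs P Q → Rg (P.flat t) (Q.flat t))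
    (hlift : ∀ G G', Rg G G' → Rs (G.toStream τ) (G'.toStream τ))
    {A B : GraphStream} (hA : A.IsTimedBy τ) (hB : B.IsTimedBy τ) :
    streamChainDist t Rs A B = graphChainDist Rg (A.flat t) (B.flat t) := by
  unfold streamChainDist graphChainDist
  congr 1
  ext n
  constructor
  · rintro ⟨f, rfl, rfl, hval, hrel⟩
    exact ⟨fun i => (f i).flat t, rfl, rfl, fun i hi => (hval i hi).flat,
      fun i hi => hflat _ _ (hval i hi.le) (hval _ hi) (hrel i hi)⟩
  · rintro ⟨g, hg0, hgn, hval, hrel⟩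
    exact ⟨fun i => (g i).toStream τ, (congrArg (·.toStream τ) hg0).trans hA.toStream_flat,
      (congrArg (·.toStream τ) hgn).trans hB.toStream_flat, fun i hi => FinGraph.toStream_valid τ (hval i hi),
      fun i hi => hlift _ _ (hrel i hi)⟩

lemma streamEdgeDist_eq_graphEdgeDist {t : ℕ} (τ : StreamTiming t) {A B : GraphStream}
    (hA : A.IsTimedBy τ) (hB : B.IsTimedBy τ) :
    streamEdgeDist t A B = graphEdgeDist (A.flat t) (B.flat t) :=
  streamChainDist_eq_graphChainDist τ (fun _ _ => edgeNeighborGraph_flat)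
    (fun _ _ => FinGraph.edgeNeighborStream_toStream τ) hA hB

lemma streamNodeDist_eq_graphNodeDist {t : ℕ} (τ : StreamTiming t) {A B : GraphStream}
    (hA : A.IsTimedBy τ) (hB : B.IsTimedBy τ) :
    streamNodeDist t A B = graphNodeDist (A.flat t) (B.flat t) :=
  streamChainDist_eq_graphChainDist τ (fun _ _ => nodeNeighborGraph_flat)
    (fun _ _ => FinGraph.nodeNeighborStream_toStream τ) hA hB

theorem flattening_lemma_general (T : ℕ) (Pi : GraphStream → GraphStream)
    (hPi : Shortsighted Pi) (S S' : GraphStream)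
    (hS : S.Valid T) (hS' : S'.Valid T)
    (hnb : edgeNeighborStream T S S' ∨ nodeNeighborStream S S')
    (t : ℕ) (ht1 : 1 ≤ t) :
    streamEdgeDist t ((Pi S).trunc t) ((Pi S').trunc t)
        = graphEdgeDist ((Pi S).flat t) ((Pi S').flat t) ∧
    streamNodeDist t ((Pi S).trunc t) ((Pi S').trunc t)
        = graphNodeDist ((Pi S).flat t) ((Pi S').flat t) := by
  have hsub : S'.IsSubstream S ∨ S.IsSubstream S' := by
    rcases hnb with (h | h) | (h | h)
    exacts [.inl (isSubstream_of_edgeRemovalStream h), .inr (isSubstream_of_edgeRemovalStream h),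
      .inl (isSubstream_of_nodeRemovalStream h), .inr (isSubstream_of_nodeRemovalStream h)]
  obtain ⟨C, hC, hSC, hS'C⟩ : ∃ C : GraphStream, C.Valid t ∧
      ((Pi S).trunc t).IsSubstream C ∧ ((Pi S').trunc t).IsSubstream C := by
    rcases hsub with h | h
    · exact ⟨S.trunc t, hS.trunc t, (hPi.isSubstream S).trunc t,
        ((hPi.isSubstream S').trans h).trunc t⟩
    · exact ⟨S'.trunc t, hS'.trunc t, ((hPi.isSubstream S).trans h).trunc t,
        (hPi.isSubstream S').trunc t⟩
  have hA := hC.isTimedBy_timing ht1 hSC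
  have hB := hC.isTimedBy_timing ht1 hS'C
  rw [← flat_trunc (Pi S), ← flat_trunc (Pi S')]
  exact ⟨streamEdgeDist_eq_graphEdgeDist _ hA hB, streamNodeDist_eq_graphNodeDist _ hA hB⟩

/-- Flattening Lemma.
Let `Pi` be any shortsighted algorithm on insertion-only graph streams of length `T`.
Then for every pair of edge-neighboring or node-neighboring graph streams `S, S'` of
length `T` and every `t ∈ [T]`, the edge (resp. node) distance between the output
streams through time `t` equals the edge (resp. node) distance between the flattened
output graphs through time `t`. -/
theorem flattening_lemma (T : ℕ) (Pi : GraphStream → GraphStream)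
    (hPi : Shortsighted Pi) (S S' : GraphStream)
    (hS : S.Valid T) (hS' : S'.Valid T)
    (hnb : edgeNeighborStream T S S' ∨ nodeNeighborStream S S')
    (t : ℕ) (ht1 : 1 ≤ t) (htT : t ≤ T) :
    streamEdgeDist t ((Pi S).trunc t) ((Pi S').trunc t)
        = graphEdgeDist ((Pi S).flat t) ((Pi S').flat t) ∧
    streamNodeDist t ((Pi S).trunc t) ((Pi S').trunc t)
        = graphNodeDist ((Pi S).flat t) ((Pi S').flat t) :=
  flattening_lemma_general T Pi hPi S S' hS hS' hnb t ht1
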